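/- For every E ∈ Σ_II there exists γ = γ(E) > 0 such that, with θ ∈ (−π/2, π/2) the unique angle satisfying sin θ = (E²−λ²)/(2E): |t_{2n−1}(E)|·e^{−2^nγ} → 1/2, |t_{2n}(E)|·e^{2^nγ} → 2, |μ_n(E)|·e^{−2^nγ} → 1/2, |ν_n(E)|·e^{−2^nγ} → sec(θ)/√2, and |ω_n(E)|·e^{−2^nγ} → |tan(θ)|/√2, as n → ∞. -/

import Mathlib

/-!
On odd steps `B_{2k+1} = V A_{2k+1}ᵀ V`, so everything is governed by the traces
`x_k = t_{2k+1}`, `y_k = t_{2k+2}` and by the coordinates `u, v, w` of `A_{2k+1}` along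
`U, V, W` (so `μ_{k+1} = u`). The traces obey the trace map `x_{k+1} = x_k² (y_k - 2) + 2`,
`y_{k+1} = y_k² (x_{k+1} - 2) + 2`; on `Σ_II` eventually `x_k < -2` and `|y_k| ≤ 1`, so `-x_k`
grows doubly exponentially and `y_k → 0`. Hence `a_k = log (-2 x_k)` satisfies
`a_{k+1} - 2 a_k → 0`, which forces `a_k - 2^k g → 0` for some `g > 0`, and `γ = g / 2`.
The other quantities are read off from `μ² = x² - y - 2`, `ν = -μ w`, `ω = -μ v`,
`w² - v² = 2 - y`, and from `(v, w)` staying parallel to `(E² - λ², 2E)`, i.e. `v = sin θ · w`.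
-/

noncomputable section

open Filter Topology

namespace TMH

/-- the pair `(A_n(E), B_n(E))`:  `A_0 = [[E−λ,−1],[1,0]]`, `B_0 = [[E+λ,−1],[1,0]]`,
`A_{n+1} = B_n A_n`, `B_{n+1} = A_n B_n`. -/
def AB (lam E : ℝ) : ℕ → Matrix (Fin 2) (Fin 2) ℝ × Matrix (Fin 2) (Fin 2) ℝ
  | 0 => (!![E - lam, -1; 1, 0], !![E + lam, -1; 1, 0])
  | n + 1 => ((AB lam E n).2 * (AB lam E n).1, (AB lam E n).1 * (AB lam E n).2)

def A (lam E : ℝ) (n : ℕ) : Matrix (Fin 2) (Fin 2) ℝ := (AB lam E n).1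
def B (lam E : ℝ) (n : ℕ) : Matrix (Fin 2) (Fin 2) ℝ := (AB lam E n).2

/-- the trace polynomials `t_n(E) = tr(A_n(E))` -/
def t (lam E : ℝ) (n : ℕ) : ℝ := (A lam E n).trace

/-- the set `Σ_I` of type-I energies -/
def SigmaI (lam : ℝ) : Set ℝ := {E | ∃ k : ℕ, 1 ≤ k ∧ t lam E k = 0}

/-- the set `Σ_II` of type-II energies -/
def SigmaII (lam : ℝ) : Set ℝ :=
  {E | ∃ n₀ : ℕ, ∀ n : ℕ, n₀ ≤ n → |t lam E (2 * n)| ≤ 2 ∧ 2 < |t lam E (2 * n + 1)|}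

/-- the set `Σ_III` of type-III energies -/
def SigmaIII (lam : ℝ) : Set ℝ :=
  {E | ∃ n₀ : ℕ, ∀ n : ℕ, n₀ ≤ n → |t lam E (2 * n + 1)| ≤ 2 ∧ 2 < |t lam E (2 * n)|}

end TMH
namespace TMH

def U : Matrix (Fin 2) (Fin 2) ℝ := !![0, 1; 1, 0]
def V : Matrix (Fin 2) (Fin 2) ℝ := !![1, 0; 0, -1]
def W : Matrix (Fin 2) (Fin 2) ℝ := !![0, -1; 1, 0]

end TMH
open Real

theorem exists_tendsto_sub_two_pow_mul {a : ℕ → ℝ}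
    (h : Tendsto (fun k => a (k + 1) - 2 * a k) atTop (𝓝 0)) :
    ∃ g : ℝ, Tendsto (fun k => a k - 2 ^ k * g) atTop (𝓝 0) := by
  set e : ℕ → ℝ := fun k => a (k + 1) - 2 * a k with he
  obtain ⟨C, hC⟩ : ∃ C, ∀ k, ‖e k‖ ≤ C := by
    obtain ⟨C, hC⟩ := (Metric.isBounded_range_of_tendsto e h).exists_norm_le
    exact ⟨C, fun k => hC _ (Set.mem_range_self k)⟩
  have hdom : ∀ j k, ‖e k / 2 ^ (j + 1)‖ ≤ C / 2 ^ (j + 1) := fun j k => by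
    rw [norm_div, norm_pow, Real.norm_two]
    exact div_le_div_of_nonneg_right (hC k) (by positivity)
  have hbound : Summable fun j : ℕ => C / 2 ^ (j + 1) := by
    simpa [div_eq_mul_inv, pow_succ, mul_assoc] using
      (summable_geometric_two.mul_left (C / 2))
  have hsum : Summable fun j => e j / 2 ^ (j + 1) :=
    Summable.of_norm_bounded hbound fun j => hdom j j
  have hpartial : ∀ k, a k = 2 ^ k * (a 0 + ∑ j ∈ Finset.range k, e j / 2 ^ (j + 1)) := by
    intro k
    induction k with
    | zero => simp
    | succ k ih =>
      rw [Finset.sum_range_succ, he]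
      field_simp
      rw [ih]
      ring
  refine ⟨a 0 + ∑' j, e j / 2 ^ (j + 1), ?_⟩
  have hrescale : ∀ k, ∑' j, e (j + k) / 2 ^ (j + 1) =
      2 ^ k * ∑' j, e (j + k) / 2 ^ (j + k + 1) := fun k => by
    rw [← tsum_mul_left]
    congr 1 with j
    rw [pow_add, pow_succ, pow_succ]
    field_simp
    ring
  have htail : ∀ k, a k - 2 ^ k * (a 0 + ∑' j, e j / 2 ^ (j + 1)) =
      -∑' j, e (j + k) / 2 ^ (j + 1) := fun k => by
    rw [hpartial k, ← hsum.sum_add_tsum_nat_add k, hrescale]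
    ring
  -- the tail is an average of `e (j + k)` with weights `2⁻¹, 2⁻², …`: dominated convergence
  have hlim : Tendsto (fun k => ∑' j, e (j + k) / 2 ^ (j + 1)) atTop (𝓝 0) := by
    simpa using tendsto_tsum_of_dominated_convergence (g := fun _ => 0) hbound
      (fun j => by
        simpa [add_comm j] using (h.comp (tendsto_add_atTop_nat j)).div_const (2 ^ (j + 1)))
      (Eventually.of_forall fun k j => hdom j (j + k))
  simpa [htail] using hlim.neg

theorem one_half_mul_sqrt_two_div (c : ℝ) : 1 / 2 * (√2 / c) = c⁻¹ / √2 := by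
  field_simp
  rw [sq_sqrt zero_le_two]

theorem one_half_mul_abs_sin_mul_sqrt_two_div_cos {θ : ℝ} (hcos : 0 < cos θ) :
    1 / 2 * (|sin θ| * (√2 / cos θ)) = |tan θ| / √2 := by
  rw [tan_eq_sin_div_cos, abs_div, abs_of_pos hcos]
  field_simp
  rw [sq_sqrt zero_le_two, mul_comm]

/-- The trace map `t_{n+3} = t_{n+1}² (t_{n+2} - 2) + 2` split by parity:
`x k = t_{2k+1}`, `y k = t_{2k+2}`. -/
structure IsTraceMapOrbit (x y : ℕ → ℝ) : Prop where
  odd_succ : ∀ k, x (k + 1) = x k ^ 2 * (y k - 2) + 2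
  even_succ : ∀ k, y (k + 1) = y k ^ 2 * (x (k + 1) - 2) + 2

theorem tendsto_exp_neg_two_pow_mul {γ : ℝ} (hγ : 0 < γ) :
    Tendsto (fun k : ℕ => exp (-(2 ^ (k + 1)) * γ)) atTop (𝓝 0) :=
  tendsto_exp_atBot.comp <| Tendsto.atBot_mul_const hγ <| tendsto_neg_atTop_atBot.comp <|
    (tendsto_pow_atTop_atTop_of_one_lt one_lt_two).comp (tendsto_add_atTop_nat 1)

namespace IsTraceMapOrbit

variable {x y : ℕ → ℝ}

theorem eventually_lt_neg_two_and_abs_le_one (h : IsTraceMapOrbit x y)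
    (hb : ∀ᶠ k in atTop, |y k| ≤ 2 ∧ 2 < |x k|) :
    ∀ᶠ k in atTop, x k < -2 ∧ |y k| ≤ 1 := by
  obtain ⟨N, hN⟩ := eventually_atTop.1 hb
  have hneg : ∀ k, N ≤ k → x (k + 1) < -2 := fun k hk => by
    have hle : x (k + 1) ≤ 2 := by
      rw [h.odd_succ]
      nlinarith [(abs_le.1 (hN k hk).1).2, sq_nonneg (x k)]
    rcases lt_abs.1 (hN (k + 1) (by omega)).2 with h' | h' <;> linarith
  refine eventually_atTop.2 ⟨N + 1, fun k hk => ⟨?_, ?_⟩⟩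
  · obtain ⟨j, rfl⟩ : ∃ j, k = j + 1 := ⟨k - 1, by omega⟩
    exact hneg j (by omega)
  · have hx1 := hneg k (by omega)
    have hy1 := abs_le.1 (hN (k + 1) (by omega)).1
    rw [← sq_le_one_iff_abs_le_one]
    nlinarith [h.even_succ k, sq_nonneg (y k)]

theorem tendsto_atBot (h : IsTraceMapOrbit x y) (hb : ∀ᶠ k in atTop, x k < -2 ∧ |y k| ≤ 1) :
    Tendsto x atTop atBot := by
  obtain ⟨N, hN⟩ := eventually_atTop.1 hb
  -- `-x - 2` at least quadruples: `-x' - 2 = x² (2 - y) - 4 ≥ (-x - 2) (-x + 2)`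
  have hgeom : Tendsto (fun k => -x (k + N) - 2) atTop atTop := by
    refine tendsto_atTop_of_geom_le (c := 4) (by linarith [(hN (0 + N) (by omega)).1])
      (by norm_num) fun k => ?_
    obtain ⟨hxk, hyk⟩ := hN (k + N) (by omega)
    rw [show k + 1 + N = k + N + 1 by omega, h.odd_succ]
    nlinarith [(abs_le.1 hyk).2, sq_nonneg (x (k + N))]
  refine (tendsto_add_atTop_iff_nat N).1 (tendsto_neg_atTop_iff.1 ?_)
  simpa using tendsto_atTop_add_const_right _ 2 hgeom

theorem tendsto_zero (h : IsTraceMapOrbit x y) (hx : Tendsto x atTop atBot)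
    (hb : ∀ᶠ k in atTop, |y k| ≤ 1) : Tendsto y atTop (𝓝 0) := by
  have hden : Tendsto (fun k => 2 - x (k + 1)) atTop atTop :=
    tendsto_atTop_add_const_left _ 2
      (tendsto_neg_atBot_atTop.comp (hx.comp (tendsto_add_atTop_nat 1)))
  have hbound : Tendsto (fun k => √(3 / (2 - x (k + 1)))) atTop (𝓝 0) := by
    simpa using (tendsto_const_nhds (x := (3 : ℝ)).div_atTop hden).sqrt
  refine squeeze_zero_norm' ?_ hbound
  filter_upwards [(tendsto_add_atTop_nat 1).eventually hb, hden.eventually_gt_atTop 0]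
    with k hk hpos
  rw [Real.norm_eq_abs]
  refine Real.abs_le_sqrt ((le_div_iff₀ hpos).2 ?_)
  nlinarith [h.even_succ k, (abs_le.1 hk).1]

theorem exists_growth_rate (h : IsTraceMapOrbit x y) (hbot : Tendsto x atTop atBot)
    (hy0 : Tendsto y atTop (𝓝 0)) :
    ∃ γ, 0 < γ ∧ Tendsto (fun k => |x k| * exp (-(2 ^ (k + 1)) * γ)) atTop (𝓝 (1 / 2)) := by
  have hneg : ∀ᶠ k in atTop, x k < 0 := hbot.eventually_lt_atBot 0
  have hratio : Tendsto (fun k => x (k + 1) / x k ^ 2) atTop (𝓝 (-2)) := by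
    have hsq : Tendsto (fun k => x k ^ 2) atTop atTop :=
      ((tendsto_pow_atTop two_ne_zero).comp (tendsto_neg_atBot_atTop.comp hbot)).congr
        fun k => by simp
    have hlim : Tendsto (fun k => y k - 2 + 2 / x k ^ 2) atTop (𝓝 (-2)) := by
      simpa using (hy0.sub_const 2).add (tendsto_const_nhds (x := (2 : ℝ)).div_atTop hsq)
    refine hlim.congr' ?_
    filter_upwards [hneg] with k hk
    rw [h.odd_succ, add_div, mul_div_cancel_left₀ _ (pow_ne_zero 2 hk.ne)]
  set a : ℕ → ℝ := fun k => log (-2 * x k) with ha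
  -- `a (k + 1) - 2 * a k = log (-x (k + 1) / (2 * x k ^ 2))`, and that ratio tends to `1`
  have hdiff : Tendsto (fun k => a (k + 1) - 2 * a k) atTop (𝓝 0) := by
    have hone : Tendsto (fun k => -1 / 2 * (x (k + 1) / x k ^ 2)) atTop (𝓝 1) := by
      convert hratio.const_mul (-1 / 2) using 2
      norm_num
    have hlim : Tendsto (fun k => log (-1 / 2 * (x (k + 1) / x k ^ 2))) atTop (𝓝 0) := by
      simpa [Function.comp_def] using (continuousAt_log one_ne_zero).tendsto.comp hone
    refine hlim.congr' ?_
    filter_upwards [hneg, (tendsto_add_atTop_nat 1).eventually hneg] with k hk hk1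
    have hk' : -2 * x k ≠ 0 := (by linarith : 0 < -2 * x k).ne'
    rw [show -1 / 2 * (x (k + 1) / x k ^ 2) = -2 * x (k + 1) / (-2 * x k * (-2 * x k)) by
      field_simp, log_div (by linarith) (mul_ne_zero hk' hk'), log_mul hk' hk', ha]
    ring
  obtain ⟨g, hg⟩ := exists_tendsto_sub_two_pow_mul hdiff
  have hatop : Tendsto a atTop atTop :=
    tendsto_log_atTop.comp <| (Tendsto.const_mul_atTop two_pos
      (tendsto_neg_atBot_atTop.comp hbot)).congr fun k => by simp
  have hgpos : 0 < g := by
    by_contra! hg0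
    refine not_tendsto_nhds_of_tendsto_atTop
      (tendsto_atTop_mono (fun k => ?_) hatop) 0 hg
    nlinarith [pow_pos (two_pos : (0 : ℝ) < 2) k]
  refine ⟨g / 2, by positivity, ?_⟩
  have hlim : Tendsto (fun k => exp (a k - 2 ^ k * g) / 2) atTop (𝓝 (1 / 2)) := by
    simpa using ((continuous_exp.tendsto 0).comp hg).div_const 2
  refine hlim.congr' ?_
  filter_upwards [hneg] with k hk
  rw [ha, exp_sub, exp_log (by linarith), abs_of_neg hk,
    show -(2 : ℝ) ^ (k + 1) * (g / 2) = -(2 ^ k * g) by ring, exp_neg]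
  field_simp

theorem tendsto_abs_even_mul_exp (h : IsTraceMapOrbit x y) (hneg : ∀ᶠ k in atTop, x k < 0)
    (hy0 : Tendsto y atTop (𝓝 0)) {γ : ℝ} (hγ : 0 < γ)
    (hxlim : Tendsto (fun k => |x k| * exp (-(2 ^ (k + 1)) * γ)) atTop (𝓝 (1 / 2))) :
    Tendsto (fun k => |y k| * exp (2 ^ (k + 1) * γ)) atTop (𝓝 2) := by
  have hden : Tendsto (fun k => (2 - x (k + 1)) * exp (-(2 ^ (k + 1 + 1)) * γ)) atTop
      (𝓝 (1 / 2)) := by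
    have hlim := (((tendsto_exp_neg_two_pow_mul hγ).const_mul 2).add hxlim).comp
      (tendsto_add_atTop_nat 1)
    rw [mul_zero, zero_add] at hlim
    refine hlim.congr' ?_
    filter_upwards [(tendsto_add_atTop_nat 1).eventually hneg] with k hk
    simp only [Function.comp_apply]
    rw [abs_of_neg hk]
    ring
  have hnum : Tendsto (fun k => 2 - y (k + 1)) atTop (𝓝 2) := by
    simpa using (hy0.comp (tendsto_add_atTop_nat 1)).const_sub 2
  -- `y_k² = (2 - y_{k+1}) / (2 - x_{k+1})`
  have hlim : Tendsto (fun k => √((2 - y (k + 1)) /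
      ((2 - x (k + 1)) * exp (-(2 ^ (k + 1 + 1)) * γ)))) atTop (𝓝 2) := by
    have := (hnum.div hden (by norm_num)).sqrt
    rwa [show (2 : ℝ) / (1 / 2) = 2 ^ 2 by norm_num, sqrt_sq two_pos.le] at this
  refine hlim.congr' ?_
  filter_upwards [(tendsto_add_atTop_nat 1).eventually hneg] with k hk
  rw [← sqrt_sq (by positivity : 0 ≤ |y k| * exp (2 ^ (k + 1) * γ))]
  congr 1
  rw [h.even_succ, pow_succ 2 (k + 1), mul_pow, sq_abs, ← exp_nat_mul]
  push_cast
  rw [neg_mul, exp_neg]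
  have : 0 < 2 - x (k + 1) := by linarith
  field_simp
  ring_nf

end IsTraceMapOrbit

theorem tendsto_abs_mul_exp_of_sq_eq {x y m : ℕ → ℝ} (hm : ∀ k, m k ^ 2 = x k ^ 2 - y k - 2)
    (hy0 : Tendsto y atTop (𝓝 0)) {γ : ℝ} (hγ : 0 < γ)
    (hxlim : Tendsto (fun k => |x k| * exp (-(2 ^ (k + 1)) * γ)) atTop (𝓝 (1 / 2))) :
    Tendsto (fun k => |m k| * exp (-(2 ^ (k + 1)) * γ)) atTop (𝓝 (1 / 2)) := by
  have he := tendsto_exp_neg_two_pow_mul hγ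
  have := ((hxlim.pow 2).sub ((hy0.add_const 2).mul (he.pow 2))).sqrt
  rw [show ((1 : ℝ) / 2) ^ 2 - (0 + 2) * 0 ^ 2 = (1 / 2) ^ 2 by norm_num,
    sqrt_sq (by norm_num)] at this
  refine this.congr fun k => ?_
  rw [← sqrt_sq (by positivity : 0 ≤ |m k| * exp (-(2 ^ (k + 1)) * γ)), mul_pow, mul_pow,
    sq_abs, sq_abs, hm]
  ring_nf


namespace TMH

open Matrix

theorem A_succ (lam E : ℝ) (n : ℕ) : A lam E (n + 1) = B lam E n * A lam E n := rfl

theorem B_succ (lam E : ℝ) (n : ℕ) : B lam E (n + 1) = A lam E n * B lam E n := rfl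

theorem A_odd_succ (lam E : ℝ) (k : ℕ) :
    A lam E (2 * (k + 1) + 1) =
      A lam E (2 * k + 1) * B lam E (2 * k + 1) * (B lam E (2 * k + 1) * A lam E (2 * k + 1)) :=
  rfl

theorem det_A_and_det_B (lam E : ℝ) : ∀ n, (A lam E n).det = 1 ∧ (B lam E n).det = 1
  | 0 => by simp [A, B, AB, det_fin_two]
  | n + 1 => by simp [A_succ, B_succ, det_mul, det_A_and_det_B lam E n]

theorem trace_A (lam E : ℝ) (n : ℕ) : (A lam E n).trace = t lam E n := rfl

theorem trace_B_succ (lam E : ℝ) (n : ℕ) : (B lam E (n + 1)).trace = t lam E (n + 1) :=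
  trace_mul_comm _ _

theorem trace_mul_mul_mul_mul {R : Type*} [CommRing R] (M N : Matrix (Fin 2) (Fin 2) R) :
    (M * N * (N * M)).trace = M.trace * N.trace * (M * N).trace - M.det * N.trace ^ 2
      - N.det * M.trace ^ 2 + 2 * M.det * N.det := by
  simp only [trace_fin_two, det_fin_two, mul_apply, Fin.sum_univ_two]
  ring

theorem t_add_three (lam E : ℝ) (n : ℕ) :
    t lam E (n + 3) = t lam E (n + 1) ^ 2 * (t lam E (n + 2) - 2) + 2 := by
  have hA : A lam E (n + 3) =
      A lam E (n + 1) * B lam E (n + 1) * (B lam E (n + 1) * A lam E (n + 1)) := rfl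
  have htr : (A lam E (n + 1) * B lam E (n + 1)).trace = t lam E (n + 2) := trace_mul_comm _ _
  obtain ⟨hdA, hdB⟩ := det_A_and_det_B lam E (n + 1)
  rw [t, hA, trace_mul_mul_mul_mul, htr, hdA, hdB, trace_B_succ, trace_A]
  ring

def vTranspose (M : Matrix (Fin 2) (Fin 2) ℝ) : Matrix (Fin 2) (Fin 2) ℝ := V * Mᵀ * V

theorem vTranspose_of (p q r s : ℝ) : vTranspose !![p, q; r, s] = !![p, -r; -q, s] := by
  ext i j
  fin_cases i <;> fin_cases j <;>
    simp only [vTranspose, V, mul_apply, Fin.sum_univ_two, transpose_apply] <;> simp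

theorem vTranspose_mul (M N : Matrix (Fin 2) (Fin 2) ℝ) :
    vTranspose (M * N) = vTranspose N * vTranspose M := by
  have hV : V * V = 1 := by
    rw [V, mul_fin_two, one_fin_two]
    norm_num
  simp only [vTranspose, transpose_mul, Matrix.mul_assoc]
  rw [← Matrix.mul_assoc V V, hV, Matrix.one_mul]

theorem vTranspose_A_and_B_even (lam E : ℝ) (k : ℕ) :
    vTranspose (A lam E (2 * k)) = A lam E (2 * k) ∧
      vTranspose (B lam E (2 * k)) = B lam E (2 * k) := by
  induction k with
  | zero => simp [A, B, AB, vTranspose_of]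
  | succ k ih =>
    have hA : vTranspose (A lam E (2 * k + 1)) = B lam E (2 * k + 1) := by
      rw [A_succ, vTranspose_mul, ih.1, ih.2, B_succ]
    have hB : vTranspose (B lam E (2 * k + 1)) = A lam E (2 * k + 1) := by
      rw [B_succ, vTranspose_mul, ih.1, ih.2, A_succ]
    rw [show 2 * (k + 1) = 2 * k + 1 + 1 by ring]
    exact ⟨by rw [A_succ, vTranspose_mul, hA, hB, B_succ],
      by rw [B_succ, vTranspose_mul, hA, hB, A_succ]⟩

theorem B_odd (lam E : ℝ) (k : ℕ) : B lam E (2 * k + 1) = vTranspose (A lam E (2 * k + 1)) := by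
  rw [A_succ, vTranspose_mul, (vTranspose_A_and_B_even lam E k).1,
    (vTranspose_A_and_B_even lam E k).2, B_succ]

/-- `2 • M = M.trace • 1 + coordU M • U + coordV M • V + coordW M • W`. -/
def coordU (M : Matrix (Fin 2) (Fin 2) ℝ) : ℝ := M 0 1 + M 1 0
def coordV (M : Matrix (Fin 2) (Fin 2) ℝ) : ℝ := M 0 0 - M 1 1
def coordW (M : Matrix (Fin 2) (Fin 2) ℝ) : ℝ := M 1 0 - M 0 1

section Coordinates

variable (M : Matrix (Fin 2) (Fin 2) ℝ)

theorem sub_vTranspose : M - vTranspose M = coordU M • U := by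
  obtain ⟨p, q, r, s, rfl⟩ : ∃ p q r s, M = !![p, q; r, s] := ⟨_, _, _, _, eta_fin_two M⟩
  rw [vTranspose_of]
  ext i j
  fin_cases i <;> fin_cases j <;> simp [coordU, U, add_comm]

theorem vTranspose_mul_sub_mul_vTranspose :
    vTranspose M * M - M * vTranspose M =
      (-(coordU M * coordW M)) • V + (-(coordU M * coordV M)) • W := by
  obtain ⟨p, q, r, s, rfl⟩ : ∃ p q r s, M = !![p, q; r, s] := ⟨_, _, _, _, eta_fin_two M⟩
  rw [vTranspose_of, mul_fin_two, mul_fin_two]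
  ext i j
  fin_cases i <;> fin_cases j <;> simp [coordU, coordV, coordW, V, W] <;> ring

theorem coordU_sq (h : M.det = 1) :
    coordU M ^ 2 = M.trace ^ 2 - (M * vTranspose M).trace - 2 := by
  obtain ⟨p, q, r, s, rfl⟩ : ∃ p q r s, M = !![p, q; r, s] := ⟨_, _, _, _, eta_fin_two M⟩
  rw [det_fin_two_of] at h
  rw [vTranspose_of, mul_fin_two, trace_fin_two_of, trace_fin_two_of]
  simp [coordU]
  linear_combination (-2) * h

theorem coordW_sq_sub_coordV_sq (h : M.det = 1) :
    coordW M ^ 2 - coordV M ^ 2 = 2 - (M * vTranspose M).trace := by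
  obtain ⟨p, q, r, s, rfl⟩ : ∃ p q r s, M = !![p, q; r, s] := ⟨_, _, _, _, eta_fin_two M⟩
  rw [det_fin_two_of] at h
  rw [vTranspose_of, mul_fin_two, trace_fin_two_of]
  simp [coordV, coordW]
  linear_combination 2 * h

theorem coordV_mul_vTranspose_mul :
    coordV (M * vTranspose M * (vTranspose M * M)) =
      M.trace * (M * vTranspose M).trace * coordV M := by
  obtain ⟨p, q, r, s, rfl⟩ : ∃ p q r s, M = !![p, q; r, s] := ⟨_, _, _, _, eta_fin_two M⟩
  rw [vTranspose_of, mul_fin_two, mul_fin_two, mul_fin_two, trace_fin_two_of, trace_fin_two_of]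
  simp [coordV]
  ring

theorem coordW_mul_vTranspose_mul :
    coordW (M * vTranspose M * (vTranspose M * M)) =
      M.trace * (M * vTranspose M).trace * coordW M := by
  obtain ⟨p, q, r, s, rfl⟩ : ∃ p q r s, M = !![p, q; r, s] := ⟨_, _, _, _, eta_fin_two M⟩
  rw [vTranspose_of, mul_fin_two, mul_fin_two, mul_fin_two, trace_fin_two_of, trace_fin_two_of]
  simp [coordW]
  ring

end Coordinates

theorem t_even_eq_trace (lam E : ℝ) (k : ℕ) :
    t lam E (2 * k + 2) = (A lam E (2 * k + 1) * vTranspose (A lam E (2 * k + 1))).trace := by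
  rw [← trace_mul_comm, ← B_odd]
  rfl

theorem isTraceMapOrbit_t (lam E : ℝ) :
    IsTraceMapOrbit (fun k => t lam E (2 * k + 1)) (fun k => t lam E (2 * k + 2)) where
  odd_succ k := t_add_three lam E (2 * k)
  even_succ k := t_add_three lam E (2 * k + 1)

theorem exists_coordV_coordW_A_odd (lam E : ℝ) (k : ℕ) :
    ∃ c : ℝ, coordV (A lam E (2 * k + 1)) = c * (E ^ 2 - lam ^ 2) ∧
      coordW (A lam E (2 * k + 1)) = c * (2 * E) := by
  induction k with
  | zero =>
    refine ⟨1, ?_, ?_⟩ <;> simp [A, AB, coordV, coordW] <;> ring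
  | succ k ih =>
    obtain ⟨c, hv, hw⟩ := ih
    refine ⟨t lam E (2 * k + 1) * t lam E (2 * k + 2) * c, ?_, ?_⟩
    · rw [A_odd_succ, B_odd, coordV_mul_vTranspose_mul, ← t_even_eq_trace, trace_A, hv]
      ring
    · rw [A_odd_succ, B_odd, coordW_mul_vTranspose_mul, ← t_even_eq_trace, trace_A, hw]
      ring

theorem coordU_sq_A_odd (lam E : ℝ) (k : ℕ) :
    coordU (A lam E (2 * k + 1)) ^ 2 = t lam E (2 * k + 1) ^ 2 - t lam E (2 * k + 2) - 2 := by
  rw [coordU_sq _ (det_A_and_det_B lam E _).1, t_even_eq_trace, trace_A]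

theorem coordW_sq_sub_coordV_sq_A_odd (lam E : ℝ) (k : ℕ) :
    coordW (A lam E (2 * k + 1)) ^ 2 - coordV (A lam E (2 * k + 1)) ^ 2 =
      2 - t lam E (2 * k + 2) := by
  rw [coordW_sq_sub_coordV_sq _ (det_A_and_det_B lam E _).1, t_even_eq_trace]

theorem A_odd_sub_B_odd (lam E : ℝ) (k : ℕ) :
    A lam E (2 * k + 1) - B lam E (2 * k + 1) = coordU (A lam E (2 * k + 1)) • U := by
  rw [B_odd, sub_vTranspose]

theorem A_even_sub_B_even (lam E : ℝ) (k : ℕ) :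
    A lam E (2 * k + 2) - B lam E (2 * k + 2) =
      (-(coordU (A lam E (2 * k + 1)) * coordW (A lam E (2 * k + 1)))) • V +
        (-(coordU (A lam E (2 * k + 1)) * coordV (A lam E (2 * k + 1)))) • W := by
  rw [A_succ lam E (2 * k + 1), B_succ lam E (2 * k + 1), B_odd,
    vTranspose_mul_sub_mul_vTranspose]

theorem eq_of_smul_U_eq {a b : ℝ} (h : a • U = b • U) : a = b := by
  simpa [U] using congrFun (congrFun h 0) 1

theorem eq_and_eq_of_smul_V_add_smul_W_eq {a b c d : ℝ} (h : a • V + b • W = c • V + d • W) :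
    a = c ∧ b = d := by
  have h00 := congrFun (congrFun h 0) 0
  have h10 := congrFun (congrFun h 1) 0
  simp [V, W] at h00 h10
  exact ⟨h00, h10⟩

theorem eventually_bounds_of_mem_SigmaII {lam E : ℝ} (hE : E ∈ SigmaII lam) :
    ∀ᶠ k in atTop, |t lam E (2 * k + 2)| ≤ 2 ∧ 2 < |t lam E (2 * k + 1)| := by
  obtain ⟨n₀, hn₀⟩ := hE
  exact eventually_atTop.2 ⟨n₀, fun k hk => ⟨(hn₀ (k + 1) (by omega)).1, (hn₀ k hk).2⟩⟩

theorem ne_zero_of_mem_SigmaII {lam E : ℝ} (hE : E ∈ SigmaII lam) : E ≠ 0 := by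
  rintro rfl
  obtain ⟨k, hy, hx⟩ := (eventually_bounds_of_mem_SigmaII hE).and
    ((tendsto_add_atTop_nat 1).eventually (eventually_bounds_of_mem_SigmaII hE)) |>.exists
  -- with `E = 0` the `W`-coordinate vanishes, forcing `t_{2k+2} ≥ 2`, hence `t_{2k+3} = 2`
  have hw : coordW (A lam 0 (2 * k + 1)) = 0 := by
    obtain ⟨c, -, hw⟩ := exists_coordV_coordW_A_odd lam 0 k
    simpa using hw
  have hy2 : t lam 0 (2 * k + 2) = 2 := by
    have := coordW_sq_sub_coordV_sq_A_odd lam 0 k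
    rw [hw] at this
    nlinarith [abs_le.1 hy.1, sq_nonneg (coordV (A lam 0 (2 * k + 1)))]
  have := hx.2
  rw [show 2 * (k + 1) + 1 = 2 * k + 3 by ring, t_add_three, hy2] at this
  norm_num at this

theorem typeII_trace_asymptotics {lam E : ℝ} (hE : E ∈ SigmaII lam) :
    ∃ γ, 0 < γ ∧
      Tendsto (fun k => |t lam E (2 * k + 1)| * exp (-(2 ^ (k + 1)) * γ)) atTop (𝓝 (1 / 2)) ∧
      Tendsto (fun k => |t lam E (2 * k + 2)| * exp (2 ^ (k + 1) * γ)) atTop (𝓝 2) ∧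
      Tendsto (fun k => t lam E (2 * k + 2)) atTop (𝓝 0) := by
  have h := isTraceMapOrbit_t lam E
  have hb := h.eventually_lt_neg_two_and_abs_le_one (eventually_bounds_of_mem_SigmaII hE)
  have hbot := h.tendsto_atBot hb
  have hy0 := h.tendsto_zero hbot (hb.mono fun _ hk => hk.2)
  obtain ⟨γ, hγ, hx⟩ := h.exists_growth_rate hbot hy0
  exact ⟨γ, hγ, hx, h.tendsto_abs_even_mul_exp (hbot.eventually_lt_atBot 0) hy0 hγ hx, hy0⟩

theorem coordV_A_odd_eq_sin_mul {lam E θ : ℝ} (hE : E ≠ 0)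
    (hsin : sin θ = (E ^ 2 - lam ^ 2) / (2 * E)) (k : ℕ) :
    coordV (A lam E (2 * k + 1)) = sin θ * coordW (A lam E (2 * k + 1)) := by
  obtain ⟨c, hv, hw⟩ := exists_coordV_coordW_A_odd lam E k
  rw [hv, hw, hsin]
  field_simp

theorem tendsto_abs_coordW_A_odd {lam E θ : ℝ} (hE : E ≠ 0) (hcos : 0 < cos θ)
    (hsin : sin θ = (E ^ 2 - lam ^ 2) / (2 * E))
    (hy0 : Tendsto (fun k => t lam E (2 * k + 2)) atTop (𝓝 0)) :
    Tendsto (fun k => |coordW (A lam E (2 * k + 1))|) atTop (𝓝 (√2 / cos θ)) := by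
  have key : ∀ k, |coordW (A lam E (2 * k + 1))| = √(2 - t lam E (2 * k + 2)) / cos θ := by
    intro k
    have h := coordW_sq_sub_coordV_sq_A_odd lam E k
    rw [coordV_A_odd_eq_sin_mul hE hsin] at h
    rw [eq_div_iff hcos.ne', ← sqrt_sq hcos.le, ← sqrt_sq_eq_abs, ← sqrt_mul (sq_nonneg _)]
    congr 1
    linear_combination h + coordW (A lam E (2 * k + 1)) ^ 2 * sin_sq_add_cos_sq θ
  simpa [key] using ((hy0.const_sub 2).sqrt).div_const (cos θ)

theorem typeII_asymptotics_general (lam : ℝ) (E : ℝ) (hE : E ∈ SigmaII lam)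
    (μ ν ω : ℕ → ℝ)
    (hμ : ∀ n : ℕ, 1 ≤ n → A lam E (2 * n - 1) - B lam E (2 * n - 1) = μ n • U)
    (hνω : ∀ n : ℕ, 1 ≤ n → A lam E (2 * n) - B lam E (2 * n) = ν n • V + ω n • W) :
    ∃ γ : ℝ, 0 < γ ∧
      ∀ θ : ℝ, θ ∈ Set.Ioo (-(Real.pi / 2)) (Real.pi / 2) →
        Real.sin θ = (E ^ 2 - lam ^ 2) / (2 * E) →
        Tendsto (fun n : ℕ => |t lam E (2 * n - 1)| * Real.exp (-(2 ^ n) * γ))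
          atTop (nhds (1 / 2)) ∧
        Tendsto (fun n : ℕ => |t lam E (2 * n)| * Real.exp ((2 ^ n) * γ))
          atTop (nhds 2) ∧
        Tendsto (fun n : ℕ => |μ n| * Real.exp (-(2 ^ n) * γ)) atTop (nhds (1 / 2)) ∧
        Tendsto (fun n : ℕ => |ν n| * Real.exp (-(2 ^ n) * γ)) atTop
          (nhds ((Real.cos θ)⁻¹ / Real.sqrt 2)) ∧
        Tendsto (fun n : ℕ => |ω n| * Real.exp (-(2 ^ n) * γ)) atTop
          (nhds (|Real.tan θ| / Real.sqrt 2)) := by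
  obtain ⟨γ, hγ, hx, hy, hy0⟩ := typeII_trace_asymptotics hE
  have hμk (k : ℕ) : μ (k + 1) = coordU (A lam E (2 * k + 1)) := by
    have h := hμ (k + 1) le_add_self
    rw [show 2 * (k + 1) - 1 = 2 * k + 1 by omega, A_odd_sub_B_odd] at h
    exact (eq_of_smul_U_eq h).symm
  have hνωk (k : ℕ) := eq_and_eq_of_smul_V_add_smul_W_eq <|
    (hνω (k + 1) le_add_self).symm.trans (A_even_sub_B_even lam E k)
  have hm : Tendsto (fun k => |μ (k + 1)| * exp (-(2 ^ (k + 1)) * γ)) atTop (𝓝 (1 / 2)) :=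
    tendsto_abs_mul_exp_of_sq_eq (fun k => by rw [hμk, coordU_sq_A_odd]) hy0 hγ hx
  refine ⟨γ, hγ, fun θ hθ hsin => ?_⟩
  have hcos : 0 < cos θ := cos_pos_of_mem_Ioo hθ
  have hE0 := ne_zero_of_mem_SigmaII hE
  have hw := tendsto_abs_coordW_A_odd hE0 hcos hsin hy0
  refine ⟨?_, ?_, ?_, ?_, ?_⟩ <;> refine (tendsto_add_atTop_iff_nat 1).1 ?_
  · exact hx.congr fun k => by rw [show 2 * (k + 1) - 1 = 2 * k + 1 by omega]
  · exact hy.congr fun k => by rw [show 2 * (k + 1) = 2 * k + 2 by ring]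
  · exact hm
  · refine (one_half_mul_sqrt_two_div (cos θ) ▸ hm.mul hw).congr fun k => ?_
    rw [(hνωk k).1, abs_neg, abs_mul, hμk]
    ring
  · refine (one_half_mul_abs_sin_mul_sqrt_two_div_cos hcos ▸
      hm.mul (hw.const_mul |sin θ|)).congr fun k => ?_
    rw [(hνωk k).2, abs_neg, abs_mul, hμk, coordV_A_odd_eq_sin_mul hE0 hsin, abs_mul]
    ring

/-- **Theorem (exact asymptotics of `t_n`, `μ_n`, `ν_n`, `ω_n` at type-II energies).**
For `E ∈ Σ_II` there is `γ = γ(E) > 0` such that, with `θ ∈ (−π/2, π/2)` the unique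
angle with `sin θ = (E²−λ²)/(2E)`:
`|t_{2n−1}|e^{−2ⁿγ} → 1/2`, `|t_{2n}|e^{2ⁿγ} → 2`, `|μ_n|e^{−2ⁿγ} → 1/2`,
`|ν_n|e^{−2ⁿγ} → sec θ/√2`, `|ω_n|e^{−2ⁿγ} → |tan θ|/√2`. -/
theorem typeII_asymptotics (lam : ℝ) (hlam : lam ≠ 0) (E : ℝ) (hE : E ∈ SigmaII lam)
    (μ ν ω : ℕ → ℝ)
    (hμ : ∀ n : ℕ, 1 ≤ n → A lam E (2 * n - 1) - B lam E (2 * n - 1) = μ n • U)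
    (hνω : ∀ n : ℕ, 1 ≤ n → A lam E (2 * n) - B lam E (2 * n) = ν n • V + ω n • W) :
    ∃ γ : ℝ, 0 < γ ∧
      ∀ θ : ℝ, θ ∈ Set.Ioo (-(Real.pi / 2)) (Real.pi / 2) →
        Real.sin θ = (E ^ 2 - lam ^ 2) / (2 * E) →
        Tendsto (fun n : ℕ => |t lam E (2 * n - 1)| * Real.exp (-(2 ^ n) * γ))
          atTop (nhds (1 / 2)) ∧
        Tendsto (fun n : ℕ => |t lam E (2 * n)| * Real.exp ((2 ^ n) * γ))
          atTop (nhds 2) ∧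
        Tendsto (fun n : ℕ => |μ n| * Real.exp (-(2 ^ n) * γ)) atTop (nhds (1 / 2)) ∧
        Tendsto (fun n : ℕ => |ν n| * Real.exp (-(2 ^ n) * γ)) atTop
          (nhds ((Real.cos θ)⁻¹ / Real.sqrt 2)) ∧
        Tendsto (fun n : ℕ => |ω n| * Real.exp (-(2 ^ n) * γ)) atTop
          (nhds (|Real.tan θ| / Real.sqrt 2)) :=
  typeII_asymptotics_general lam E hE μ ν ω hμ hνω

end TMH
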